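/- On the square grid ℤ², for any finite configuration of n coins whose span is a full a × b axis-aligned rectangle of lattice points (with a, b ≥ 1), we have n ≥ ⌈(a+b)/2⌉. -/

import Mathlib

/-- The span of a set of positions: the least superset closed under adding any
vertex adjacent to at least 2 vertices of the set. -/
def Span {P : Type*} (G : SimpleGraph P) (C : Set P) : Set P :=
  ⋂₀ {S : Set P | C ⊆ S ∧ ∀ p, (∃ a ∈ S, ∃ b ∈ S, a ≠ b ∧ G.Adj p a ∧ G.Adj p b) → p ∈ S}


/-- The square grid on ℤ². -/
def Grid : SimpleGraph (ℤ × ℤ) where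
  Adj p q := |p.1 - q.1| + |p.2 - q.2| = 1
  symm := ⟨by intro p q h; beta_reduce at h ⊢; rw [abs_sub_comm q.1 p.1, abs_sub_comm q.2 p.2]; exact h⟩
  loopless := ⟨by intro p; simp⟩

/-!
Let the perimeter of a finite set of vertices be the number of edges leaving it. In a graph of
maximum degree 4, adding a vertex with at least two neighbours in the set removes at least two
boundary edges and creates at most two, so the perimeter never grows while the span is built up.
Hence the perimeter `2(a + b)` of the spanned rectangle is at most the perimeter of the initial
coins, which is at most `4n`.
-/

open Finset

section Span

variable {P : Type*} (G : SimpleGraph P) {C : Set P}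

lemma subset_span : C ⊆ Span G C :=
  fun _ hp => Set.mem_sInter.mpr fun _ hS => hS.1 hp

lemma mem_span_of_adj {p a b : P} (ha : a ∈ Span G C) (hb : b ∈ Span G C) (hab : a ≠ b)
    (hpa : G.Adj p a) (hpb : G.Adj p b) : p ∈ Span G C :=
  fun _ hS => hS.2 p ⟨a, ha _ hS, b, hb _ hS, hab, hpa, hpb⟩

lemma span_subset_of_closed {S : Set P} (hCS : C ⊆ S)
    (hS : ∀ p, (∃ a ∈ S, ∃ b ∈ S, a ≠ b ∧ G.Adj p a ∧ G.Adj p b) → p ∈ S) :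
    Span G C ⊆ S :=
  Set.sInter_subset_of_mem ⟨hCS, hS⟩

end Span

namespace SimpleGraph

variable {V : Type*} [DecidableEq V] (G : SimpleGraph V) [G.LocallyFinite]

def perimeter (S : Finset V) : ℕ := ∑ v ∈ S, #(G.neighborFinset v \ S)

lemma perimeter_le_mul_card {k : ℕ} (hdeg : ∀ v, G.degree v ≤ k) (S : Finset V) :
    G.perimeter S ≤ k * #S :=
  calc G.perimeter S ≤ ∑ _v ∈ S, k := sum_le_sum fun v _ =>
        calc #(G.neighborFinset v \ S) ≤ #(G.neighborFinset v) := card_le_card sdiff_subset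
          _ ≤ k := (G.card_neighborFinset_eq_degree v).trans_le (hdeg v)
    _ = k * #S := by rw [sum_const, smul_eq_mul, mul_comm]

lemma card_neighborFinset_sdiff_insert_add {p q : V} (S : Finset V) :
    #(G.neighborFinset q \ insert p S) + (if p ∈ G.neighborFinset q \ S then 1 else 0) =
      #(G.neighborFinset q \ S) := by
  rw [sdiff_insert]
  split_ifs with h
  · exact card_erase_add_one h
  · rw [erase_eq_of_notMem h, add_zero]

lemma perimeter_insert_add {p : V} {S : Finset V} (hp : p ∉ S) :
    G.perimeter (insert p S) + 2 * #(G.neighborFinset p ∩ S) = G.perimeter S + G.degree p := by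
  have hcount : ∑ q ∈ S, (if p ∈ G.neighborFinset q \ S then 1 else 0) =
      #(G.neighborFinset p ∩ S) := by
    rw [← card_filter (p ∈ G.neighborFinset · \ S), inter_comm, ← filter_mem_eq_inter]
    congr 1
    exact filter_congr fun _ _ => by simp [G.adj_comm, hp]
  have hself : #(G.neighborFinset p \ insert p S) + #(G.neighborFinset p ∩ S) = G.degree p := by
    rw [sdiff_insert_of_notMem (G.notMem_neighborFinset_self p), card_sdiff_add_card_inter,
      card_neighborFinset_eq_degree]
  have hrest : ∑ q ∈ S, (#(G.neighborFinset q \ insert p S) +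
      (if p ∈ G.neighborFinset q \ S then 1 else 0)) = G.perimeter S :=
    sum_congr rfl fun _ _ => G.card_neighborFinset_sdiff_insert_add S
  rw [sum_add_distrib, hcount] at hrest
  rw [← hrest, perimeter, sum_insert hp]
  omega

lemma perimeter_insert_le {p : V} {S : Finset V} (hdeg : G.degree p ≤ 4) (hp : p ∉ S)
    (hneighbors : 2 ≤ #(G.neighborFinset p ∩ S)) : G.perimeter (insert p S) ≤ G.perimeter S := by
  have := G.perimeter_insert_add hp
  omega

/-- Among the sets between `C` and `R` of perimeter at most that of `C`, a largest one is closed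
under the span rule, hence contains `Span G C = R`. -/
theorem perimeter_le_of_span_eq (hdeg : ∀ v, G.degree v ≤ 4) {C R : Finset V}
    (h : Span G C = R) : G.perimeter R ≤ G.perimeter C := by
  have hCR : C ⊆ R := by rw [← coe_subset, ← h]; exact subset_span G
  obtain ⟨S, hS, hmax⟩ := exists_max_image
    {S ∈ R.powerset | C ⊆ S ∧ G.perimeter S ≤ G.perimeter C} card ⟨C, by simp [hCR]⟩
  simp only [mem_filter, mem_powerset, and_imp] at hS hmax
  obtain ⟨hSR, hCS, hSC⟩ := hS
  suffices R ⊆ S by rwa [subset_antisymm hSR this] at hSC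
  rw [← coe_subset, ← h]
  refine span_subset_of_closed G (coe_subset.mpr hCS) fun p ⟨a, ha, b, hb, hab, hpa, hpb⟩ => ?_
  by_contra hp
  have hspan : ∀ {v}, v ∈ S → v ∈ Span G C := fun hv => h ▸ mem_coe.mpr (hSR hv)
  have hpR : p ∈ R := by
    rw [← mem_coe, ← h]
    exact mem_span_of_adj G (hspan ha) (hspan hb) hab hpa hpb
  have hneighbors : 2 ≤ #(G.neighborFinset p ∩ S) :=
    one_lt_card.mpr ⟨a, by simp_all, b, by simp_all, hab⟩
  have := hmax (insert p S) (insert_subset hpR hSR) (hCS.trans (subset_insert _ _))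
    ((G.perimeter_insert_le (hdeg p) hp hneighbors).trans hSC)
  rw [card_insert_of_notMem hp] at this
  omega

end SimpleGraph

def gridDirs : Finset (ℤ × ℤ) := {(1, 0), (-1, 0), (0, 1), (0, -1)}

lemma grid_adj_iff {p q : ℤ × ℤ} : Grid.Adj p q ↔ q - p ∈ gridDirs := by
  obtain ⟨x, y⟩ := p
  obtain ⟨u, v⟩ := q
  change |x - u| + |y - v| = 1 ↔ _
  simp only [gridDirs, mem_insert, mem_singleton, Prod.mk_sub_mk, Prod.ext_iff]
  rcases abs_cases (x - u) with ⟨h₁, _⟩ | ⟨h₁, _⟩ <;>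
    rcases abs_cases (y - v) with ⟨h₂, _⟩ | ⟨h₂, _⟩ <;> omega

instance : Grid.LocallyFinite := fun p =>
  Fintype.ofFinset (gridDirs.map (addLeftEmbedding p)) fun q => by
    simp only [mem_map, addLeftEmbedding_apply, SimpleGraph.mem_neighborSet, grid_adj_iff]
    exact ⟨by rintro ⟨d, hd, rfl⟩; simpa using hd, fun h => ⟨q - p, h, add_sub_cancel p q⟩⟩

lemma grid_neighborFinset (p : ℤ × ℤ) :
    Grid.neighborFinset p = gridDirs.map (addLeftEmbedding p) :=
  Set.toFinset_ofFinset _ _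

lemma grid_degree_le_four (p : ℤ × ℤ) : Grid.degree p ≤ 4 := by
  rw [← SimpleGraph.card_neighborFinset_eq_degree, grid_neighborFinset, card_map]
  exact card_le_four

lemma grid_perimeter_eq_sum (S : Finset (ℤ × ℤ)) :
    Grid.perimeter S = ∑ d ∈ gridDirs, #{q ∈ S | q + d ∉ S} := by
  have hcard (q : ℤ × ℤ) : #(Grid.neighborFinset q \ S) = #{d ∈ gridDirs | q + d ∉ S} := by
    rw [grid_neighborFinset, sdiff_eq_filter, filter_map, card_map]
    rfl
  simp only [SimpleGraph.perimeter, hcard, card_filter]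
  exact sum_comm

section Product

variable {α β : Type*} [AddZeroClass α] [AddZeroClass β] [DecidableEq α] [DecidableEq β]

lemma card_filter_add_fst_notMem_product (I : Finset α) (J : Finset β) (e : α) :
    #{q ∈ I ×ˢ J | q + (e, 0) ∉ I ×ˢ J} = #{u ∈ I | u + e ∉ I} * #J := by
  rw [← card_product, ← filter_product_left]
  congr 1
  exact filter_congr fun q hq => by simp_all [mem_product]

lemma card_filter_add_snd_notMem_product (I : Finset α) (J : Finset β) (e : β) :
    #{q ∈ I ×ˢ J | q + (0, e) ∉ I ×ˢ J} = #I * #{v ∈ J | v + e ∉ J} := by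
  rw [← card_product, ← filter_product_right]
  congr 1
  exact filter_congr fun q hq => by simp_all [mem_product]

end Product

lemma card_filter_add_notMem_Icc {m n e : ℤ} (hmn : m ≤ n) (he : e = 1 ∨ e = -1) :
    #{u ∈ Icc m n | u + e ∉ Icc m n} = 1 := by
  rw [card_eq_one]
  rcases he with rfl | rfl
  · exact ⟨n, by ext; simp only [mem_filter, mem_Icc, mem_singleton]; omega⟩
  · exact ⟨m, by ext; simp only [mem_filter, mem_Icc, mem_singleton]; omega⟩

lemma grid_perimeter_Icc_product {x₀ x₁ y₀ y₁ : ℤ} (hx : x₀ ≤ x₁) (hy : y₀ ≤ y₁) :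
    Grid.perimeter (Icc x₀ x₁ ×ˢ Icc y₀ y₁) = 2 * #(Icc x₀ x₁) + 2 * #(Icc y₀ y₁) := by
  rw [grid_perimeter_eq_sum, gridDirs, sum_insert (by decide), sum_insert (by decide),
    sum_insert (by decide), sum_singleton, card_filter_add_fst_notMem_product,
    card_filter_add_fst_notMem_product, card_filter_add_snd_notMem_product,
    card_filter_add_snd_notMem_product, card_filter_add_notMem_Icc hx (by simp),
    card_filter_add_notMem_Icc hx (by simp), card_filter_add_notMem_Icc hy (by simp),
    card_filter_add_notMem_Icc hy (by simp)]
  ring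

/-- If the span of a configuration of `n` coins is a full `a × b` rectangle
(`a, b ≥ 1`), then `n ≥ ⌈(a+b)/2⌉`, where `a + b` is the half-perimeter. -/
theorem coins_ge_half_perimeter (C : Finset (ℤ × ℤ)) (a b : ℕ) (x₀ y₀ : ℤ)
    (ha : 1 ≤ a) (hb : 1 ≤ b)
    (hspan : Span Grid ↑C =
      ↑(Finset.Icc x₀ (x₀ + (a : ℤ) - 1) ×ˢ Finset.Icc y₀ (y₀ + (b : ℤ) - 1))) :
    (a + b + 1) / 2 ≤ C.card := by
  have hrect := grid_perimeter_Icc_product (x₀ := x₀) (x₁ := x₀ + a - 1) (y₀ := y₀)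
    (y₁ := y₀ + b - 1) (by omega) (by omega)
  rw [Int.card_Icc, Int.card_Icc] at hrect
  have hR := Grid.perimeter_le_of_span_eq grid_degree_le_four hspan
  have hC := Grid.perimeter_le_mul_card grid_degree_le_four C
  omega
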